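/- Let p : E → B be a separated restriction semifunctor between restriction categories. If f₁ ≫ f₂ = f is a precise commuting triangle in E (i.e. it commutes and (f₁)‾ = f̄) and both f and f₂ are p-prone, then f₁ is p-prone. -/
import Mathlib


open CategoryTheory

universe v₁ u₁ v₂ u₂ v₃ u₃

/-- A restriction category: a category equipped with a restriction combinator
satisfying the four restriction axioms [R.1]–[R.4]. -/
class RestrictionCategory (C : Type u₁) [Category.{v₁} C] where
  rest : ∀ {A B : C}, (A ⟶ B) → (A ⟶ A)
  rest_comp_self : ∀ {A B : C} (f : A ⟶ B), rest f ≫ f = f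
  rest_comm : ∀ {A B C' : C} (f : A ⟶ B) (g : A ⟶ C'), rest f ≫ rest g = rest g ≫ rest f
  rest_rest_comp : ∀ {A B C' : C} (f : A ⟶ B) (g : A ⟶ C'),
    rest (rest f ≫ g) = rest f ≫ rest g
  comp_rest : ∀ {A B C' : C} (f : A ⟶ B) (g : B ⟶ C'),
    f ≫ rest g = rest (f ≫ g) ≫ f

open RestrictionCategory

/-- A restriction semifunctor: preserves composition and restriction
(but not necessarily identities). -/
structure RestrictionSemifunctor (E : Type u₁) (B : Type u₂) [Category.{v₁} E]
    [Category.{v₂} B] [RestrictionCategory E] [RestrictionCategory B] where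
  obj : E → B
  map : ∀ {X Y : E}, (X ⟶ Y) → (obj X ⟶ obj Y)
  map_comp : ∀ {X Y Z : E} (f : X ⟶ Y) (g : Y ⟶ Z), map (f ≫ g) = map f ≫ map g
  map_rest : ∀ {X Y : E} (f : X ⟶ Y), map (rest f) = rest (map f)

variable {E : Type u₁} {B : Type u₂} [Category.{v₁} E] [Category.{v₂} B]
  [RestrictionCategory E] [RestrictionCategory B]

/-- A morphism `f' : X' ⟶ X` is `p`-prone if every precise triangle
`h ≫ p(f') = p(g)` in the base has a unique precise lifting. -/
def RestrictionSemifunctor.IsProne (p : RestrictionSemifunctor E B) {X' X : E}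
    (f' : X' ⟶ X) : Prop :=
  ∀ (Y : E) (g : Y ⟶ X) (h : p.obj Y ⟶ p.obj X'),
    h ≫ p.map f' = p.map g → rest h = rest (p.map g) →
    ∃! ht : Y ⟶ X', p.map ht = h ∧ ht ≫ f' = g ∧ rest ht = rest g

/-- A restriction semifunctor is separated if it is injective on restriction
idempotents on each object. -/
def RestrictionSemifunctor.IsSeparated (p : RestrictionSemifunctor E B) : Prop :=
  ∀ (X : E) (e e' : X ⟶ X), rest e = e → rest e' = e' → p.map e = p.map e' → e = e'

section Aux

variable {C : Type u₃} [Category.{v₃} C] [RestrictionCategory C]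

lemma rest_idem {A B' : C} (f : A ⟶ B') : rest f ≫ rest f = rest f := by
  rw [← rest_rest_comp, rest_comp_self]

lemma rest_rest {A B' : C} (f : A ⟶ B') : rest (rest f) = rest f := by
  have h1 : rest f ≫ rest (rest f) = rest (rest f) := by
    rw [← rest_rest_comp, rest_idem]
  have h2 : rest f ≫ rest (rest f) = rest (rest f) ≫ rest f :=
    rest_comm f (rest f)
  rw [← h1, h2, rest_comp_self]

lemma rest_comp_rest {A B' C' : C} (f : A ⟶ B') (g : B' ⟶ C') :
    rest (f ≫ rest g) = rest (f ≫ g) := by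
  calc rest (f ≫ rest g) = rest (rest (f ≫ g) ≫ f) := by rw [comp_rest]
    _ = rest (f ≫ g) ≫ rest f := rest_rest_comp _ _
    _ = rest f ≫ rest (f ≫ g) := (rest_comm f (f ≫ g)).symm
    _ = rest (rest f ≫ (f ≫ g)) := (rest_rest_comp _ _).symm
    _ = rest (f ≫ g) := by rw [← Category.assoc, rest_comp_self]

end Aux

/-- For a separated restriction semifunctor, if `f₁ ≫ f₂ = f` is a precise triangle
and both `f` and `f₂` are p-prone, then `f₁` is p-prone. -/
theorem separated_left_factor_prone (p : RestrictionSemifunctor E B)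
    (hsep : p.IsSeparated) {X X' X'' : E}
    (f₁ : X ⟶ X') (f₂ : X' ⟶ X'') (f : X ⟶ X'')
    (hcomm : f₁ ≫ f₂ = f) (hprecise : rest f₁ = rest f)
    (hf : p.IsProne f) (hf₂ : p.IsProne f₂) :
    p.IsProne f₁ := by
  intro Y g h hcomm' hrest'
  have hpf₁ : rest (p.map f₁) = rest (p.map f) := by
    rw [← p.map_rest, ← p.map_rest, hprecise]
  have hpg : p.map g = h ≫ p.map f₁ := hcomm'.symm
  have key : rest (p.map g) = rest (h ≫ p.map f) := by
    rw [hpg, ← rest_comp_rest, hpf₁, rest_comp_rest]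
  have h1 : h ≫ p.map f = p.map (g ≫ f₂) := by
    rw [p.map_comp, hpg, Category.assoc, ← p.map_comp, hcomm]
  have h2 : rest h = rest (p.map (g ≫ f₂)) := by rw [hrest', key, h1]
  obtain ⟨k, ⟨hk1, hk2, hk3⟩, huniq⟩ := hf Y (g ≫ f₂) h h1 h2
  have hrg : rest g = rest (g ≫ f₂) := by
    apply hsep Y _ _ (rest_rest g) (rest_rest _)
    rw [p.map_rest, p.map_rest, key, h1]
  have hrk : rest k = rest g := by rw [hk3, hrg]
  have c1 : p.map g ≫ p.map f₂ = p.map (g ≫ f₂) := (p.map_comp _ _).symm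
  have c2 : rest (p.map g) = rest (p.map (g ≫ f₂)) := by rw [key, h1]
  obtain ⟨t, -, ht⟩ := hf₂ Y (g ≫ f₂) (p.map g) c1 c2
  have e1 : k ≫ f₁ = g := by
    have a1 : p.map (k ≫ f₁) = p.map g := by rw [p.map_comp, hk1, hcomm']
    have a2 : (k ≫ f₁) ≫ f₂ = g ≫ f₂ := by rw [Category.assoc, hcomm, hk2]
    have a3 : rest (k ≫ f₁) = rest (g ≫ f₂) := by
      rw [← rest_comp_rest, hprecise, rest_comp_rest, hk2]
    exact (ht _ ⟨a1, a2, a3⟩).trans (ht g ⟨rfl, rfl, hrg⟩).symm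
  refine ⟨k, ⟨hk1, e1, hrk⟩, ?_⟩
  rintro m ⟨hm1, hm2, hm3⟩
  apply huniq
  refine ⟨hm1, ?_, ?_⟩
  · rw [← hcomm, ← Category.assoc, hm2]
  · rw [hm3, hrg]
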